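/- Let G be a connected finite simple graph of order n ≥ 2 and let uv be an edge of G. Then b_dR(G) ≤ deg(u) + deg(v) − 1 − |N(u) ∩ N(v)|. -/

import Mathlib

/-- A double Roman dominating function (DRDF) on a graph `G`: a function
`f : V → ℕ` taking values in `{0,1,2,3}` such that every vertex assigned `0`
has a neighbor assigned `3` or two distinct neighbors assigned `2`, and every
vertex assigned `1` has a neighbor assigned at least `2`. -/
def IsDRDF {V : Type*} (G : SimpleGraph V) (f : V → ℕ) : Prop :=
  (∀ v, f v ≤ 3) ∧
  (∀ v, f v = 0 →
    (∃ w, G.Adj v w ∧ f w = 3) ∨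
    (∃ w₁ w₂, G.Adj v w₁ ∧ G.Adj v w₂ ∧ w₁ ≠ w₂ ∧ f w₁ = 2 ∧ f w₂ = 2)) ∧
  (∀ v, f v = 1 → ∃ w, G.Adj v w ∧ 2 ≤ f w)

/-- The double Roman domination number `γ_dR(G)`: the minimum weight of a DRDF on `G`. -/
noncomputable def gammaDR {V : Type*} [Fintype V] (G : SimpleGraph V) : ℕ :=
  sInf {k | ∃ f : V → ℕ, IsDRDF G f ∧ ∑ v, f v = k}

/-- The double Roman bondage number `b_dR(G)`: the minimum cardinality of a set
`B` of edges of `G` such that `γ_dR(G - B) > γ_dR(G)`. -/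
noncomputable def bDR {V : Type*} [Fintype V] (G : SimpleGraph V) : ℕ :=
  sInf {k | ∃ B : Finset (Sym2 V), ↑B ⊆ G.edgeSet ∧ B.card = k ∧
    gammaDR G < gammaDR (G.deleteEdges ↑B)}


/-!
Delete every edge at `u` and every edge at `v` except those joining `v` to a common neighbour
of `u` and `v`; that is `deg u + deg v - 1 - |N(u) ∩ N(v)|` edges. In the resulting graph `u` is
isolated, so a minimum DRDF `f` of it has `f u ≥ 2`, and every neighbour of `v` is a neighbour of
`u` in `G`. Resetting `f u` to `min (f v) 1` gives a lighter DRDF of `G`: `u` is dominated in `G`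
through `v`'s neighbours when `f v ≤ 1`, and through `v` itself when `f v ≥ 2`.
-/

open Finset

section

variable {V : Type*}

def IsDRDominatedAt (G : SimpleGraph V) (f : V → ℕ) (x : V) : Prop :=
  (f x = 0 →
    (∃ w, G.Adj x w ∧ f w = 3) ∨
    (∃ w₁ w₂, G.Adj x w₁ ∧ G.Adj x w₂ ∧ w₁ ≠ w₂ ∧ f w₁ = 2 ∧ f w₂ = 2)) ∧
  (f x = 1 → ∃ w, G.Adj x w ∧ 2 ≤ f w)

theorem isDRDF_iff {G : SimpleGraph V} {f : V → ℕ} :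
    IsDRDF G f ↔ (∀ x, f x ≤ 3) ∧ ∀ x, IsDRDominatedAt G f x := by
  simp only [IsDRDF, IsDRDominatedAt, forall_and]

theorem IsDRDominatedAt.transfer {G H : SimpleGraph V} {f g : V → ℕ} {x y : V}
    (hf : IsDRDominatedAt H f x) (hxy : g y = f x)
    (hN : ∀ w, H.Adj x w → G.Adj y w ∧ g w = f w) : IsDRDominatedAt G g y := by
  refine ⟨fun h0 => ?_, fun h1 => ?_⟩
  · rcases hf.1 (hxy ▸ h0) with ⟨w, hw, h3⟩ | ⟨w₁, w₂, hw₁, hw₂, hne, h₁, h₂⟩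
    · exact Or.inl ⟨w, (hN w hw).1, (hN w hw).2.trans h3⟩
    · exact Or.inr ⟨w₁, w₂, (hN w₁ hw₁).1, (hN w₂ hw₂).1, hne,
        (hN w₁ hw₁).2.trans h₁, (hN w₂ hw₂).2.trans h₂⟩
  · obtain ⟨w, hw, h2⟩ := hf.2 (hxy ▸ h1)
    exact ⟨w, (hN w hw).1, (hN w hw).2 ▸ h2⟩

theorem isDRDF_const_two (G : SimpleGraph V) : IsDRDF G fun _ => 2 :=
  ⟨fun _ => by norm_num, fun _ h => absurd h (by norm_num), fun _ h => absurd h (by norm_num)⟩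

theorem IsDRDF.two_le_of_forall_not_adj {G : SimpleGraph V} {f : V → ℕ} (hf : IsDRDF G f)
    {u : V} (hu : ∀ w, ¬ G.Adj u w) : 2 ≤ f u := by
  by_contra! h
  interval_cases hfu : f u
  · rcases hf.2.1 u hfu with ⟨w, hw, -⟩ | ⟨w, -, hw, -⟩ <;> exact hu w hw
  · obtain ⟨w, hw, -⟩ := hf.2.2 u hfu
    exact hu w hw

theorem IsDRDF.update_of_forall_not_adj [DecidableEq V] {G H : SimpleGraph V} {f : V → ℕ}
    (hf : IsDRDF H f) (hHG : H ≤ G) {u v : V} (hu : ∀ w, ¬ H.Adj u w) (huv : G.Adj u v)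
    (hv : ∀ w, H.Adj v w → G.Adj u w) :
    IsDRDF G (Function.update f u (min (f v) 1)) := by
  have hf' := isDRDF_iff.1 hf
  have hne : ∀ {x w}, H.Adj x w → w ≠ u := fun h hw => hu _ (hw ▸ h.symm)
  refine isDRDF_iff.2 ⟨fun x => ?_, fun x => ?_⟩
  · rcases eq_or_ne x u with rfl | hx
    · simp only [Function.update_self]; omega
    · simpa only [Function.update_of_ne hx] using hf'.1 x
  rcases eq_or_ne x u with rfl | hx
  · by_cases hv1 : f v ≤ 1
    · refine (hf'.2 v).transfer ?_ fun w hw => ⟨hv w hw, Function.update_of_ne (hne hw) _ _⟩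
      simp only [Function.update_self]; omega
    · refine ⟨fun h => by simp only [Function.update_self] at h; omega, fun _ => ⟨v, huv, ?_⟩⟩
      simp only [Function.update_of_ne huv.ne.symm]; omega
  · exact (hf'.2 x).transfer (Function.update_of_ne hx _ _)
      fun w hw => ⟨hHG hw, Function.update_of_ne (hne hw) _ _⟩

section gammaDR

variable [Fintype V] {G H : SimpleGraph V}

theorem gammaDR_le {f : V → ℕ} (hf : IsDRDF G f) : gammaDR G ≤ ∑ x, f x :=
  Nat.sInf_le ⟨f, hf, rfl⟩

theorem exists_isDRDF_sum_eq_gammaDR (G : SimpleGraph V) :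
    ∃ f, IsDRDF G f ∧ ∑ x, f x = gammaDR G :=
  Nat.sInf_mem (⟨_, _, isDRDF_const_two G, rfl⟩ :
    {k | ∃ f : V → ℕ, IsDRDF G f ∧ ∑ x, f x = k}.Nonempty)

theorem gammaDR_lt_of_forall_not_adj (hHG : H ≤ G) {u v : V} (hu : ∀ w, ¬ H.Adj u w)
    (huv : G.Adj u v) (hv : ∀ w, H.Adj v w → G.Adj u w) : gammaDR G < gammaDR H := by
  classical
  obtain ⟨f, hf, hsum⟩ := exists_isDRDF_sum_eq_gammaDR H
  have hfu := hf.two_le_of_forall_not_adj hu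
  calc gammaDR G ≤ ∑ x, Function.update f u (min (f v) 1) x :=
        gammaDR_le (hf.update_of_forall_not_adj hHG hu huv hv)
    _ < ∑ x, f x := by
        refine sum_lt_sum (fun x _ => ?_) ⟨u, mem_univ u, ?_⟩
        · rcases eq_or_ne x u with rfl | hx
          · simp only [Function.update_self]; omega
          · rw [Function.update_of_ne hx]
        · simp only [Function.update_self]; omega
    _ = gammaDR H := hsum

theorem bDR_le_card_of_forall_not_adj {B : Finset (Sym2 V)} (hB : ↑B ⊆ G.edgeSet) {u v : V}
    (hu : ∀ w, ¬ (G.deleteEdges ↑B).Adj u w) (huv : G.Adj u v)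
    (hv : ∀ w, (G.deleteEdges ↑B).Adj v w → G.Adj u w) : bDR G ≤ #B :=
  Nat.sInf_le ⟨B, hB, rfl, gammaDR_lt_of_forall_not_adj (G.deleteEdges_le _) hu huv hv⟩

end gammaDR

namespace SimpleGraph

variable [DecidableEq V] (G : SimpleGraph V) [G.LocallyFinite] {u v : V}

def isolatingEdges (u v : V) : Finset (Sym2 V) :=
  (G.incidenceFinset u ∪ G.incidenceFinset v) \
    (G.neighborFinset u ∩ G.neighborFinset v).image (s(v, ·))

theorem isolatingEdges_subset_edgeSet : ↑(G.isolatingEdges u v) ⊆ G.edgeSet := by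
  intro e he
  simp only [isolatingEdges, coe_sdiff, coe_union, coe_incidenceFinset] at he
  exact he.1.elim (·.1) (·.1)

theorem not_adj_deleteEdges_isolatingEdges (huv : G.Adj u v) (w : V) :
    ¬ (G.deleteEdges ↑(G.isolatingEdges u v)).Adj u w := by
  rw [deleteEdges_adj, mem_coe, isolatingEdges, mem_sdiff, not_and_not_right]
  intro huw
  refine ⟨mem_union_left _ (by simpa using huw), ?_⟩
  rw [mem_image]
  rintro ⟨a, ha, hva⟩
  rcases Sym2.eq_iff.1 hva with ⟨rfl, -⟩ | ⟨-, rfl⟩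
  · exact huv.ne rfl
  · exact ((mem_neighborFinset _ _ _).1 (mem_inter.1 ha).1).ne rfl

theorem adj_of_adj_deleteEdges_isolatingEdges {w : V}
    (h : (G.deleteEdges ↑(G.isolatingEdges u v)).Adj v w) : G.Adj u w := by
  rw [deleteEdges_adj, mem_coe, isolatingEdges, mem_sdiff, not_and_not_right] at h
  obtain ⟨a, ha, hva⟩ := mem_image.1 (h.2 (mem_union_right _ (by simpa using h.1)))
  rw [Sym2.congr_right] at hva
  exact hva ▸ (mem_neighborFinset _ _ _).1 (mem_inter.1 ha).1

theorem card_isolatingEdges_add_le (huv : G.Adj u v) :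
    #(G.isolatingEdges u v) + #(G.neighborFinset u ∩ G.neighborFinset v) + 1 ≤
      G.degree u + G.degree v := by
  have hsub : (G.neighborFinset u ∩ G.neighborFinset v).image (s(v, ·)) ⊆
      G.incidenceFinset u ∪ G.incidenceFinset v := by
    intro e he
    obtain ⟨a, ha, rfl⟩ := mem_image.1 he
    exact mem_union_right _ (by simpa using (mem_inter.1 ha).2)
  have hcommon : #((G.neighborFinset u ∩ G.neighborFinset v).image (s(v, ·))) =
      #(G.neighborFinset u ∩ G.neighborFinset v) :=
    card_image_of_injective _ fun _ _ => Sym2.congr_right.1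
  have huv_mem : s(u, v) ∈ G.incidenceFinset u ∩ G.incidenceFinset v := by
    refine mem_inter.2 ⟨by simpa using huv, ?_⟩
    rw [mem_incidenceFinset, Sym2.eq_swap]
    exact (G.mem_incidenceSet v u).2 huv.symm
  have hunion := card_union_add_card_inter (G.incidenceFinset u) (G.incidenceFinset v)
  rw [card_incidenceFinset_eq_degree, card_incidenceFinset_eq_degree] at hunion
  have hsdiff := card_sdiff_add_card_eq_card hsub
  have hinter := card_pos.2 ⟨_, huv_mem⟩
  rw [isolatingEdges]
  omega

end SimpleGraph

end

theorem bDR_le_of_edge_general {V : Type*} [Fintype V] [DecidableEq V]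
    (G : SimpleGraph V) [DecidableRel G.Adj]
    (u v : V) (huv : G.Adj u v) :
    (bDR G : ℤ) ≤ (G.degree u : ℤ) + G.degree v - 1 -
      (G.neighborFinset u ∩ G.neighborFinset v).card := by
  have hbDR : bDR G ≤ #(G.isolatingEdges u v) :=
    bDR_le_card_of_forall_not_adj G.isolatingEdges_subset_edgeSet
      (G.not_adj_deleteEdges_isolatingEdges huv) huv
      fun _ => G.adj_of_adj_deleteEdges_isolatingEdges
  have hcard := G.card_isolatingEdges_add_le huv
  omega

/-- If `G` is a connected graph of order `n ≥ 2` and `uv ∈ E(G)`, then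
`b_dR(G) ≤ deg(u) + deg(v) − 1 − |N(u) ∩ N(v)|`. -/
theorem bDR_le_of_edge {V : Type*} [Fintype V] [DecidableEq V]
    (G : SimpleGraph V) [DecidableRel G.Adj]
    (hconn : G.Connected) (hn : 2 ≤ Fintype.card V) (u v : V) (huv : G.Adj u v) :
    (bDR G : ℤ) ≤ (G.degree u : ℤ) + G.degree v - 1 -
      (G.neighborFinset u ∩ G.neighborFinset v).card :=
  bDR_le_of_edge_general G u v huv
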